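/- Let (X,d) be a proper geodesic metric space, L : [0,∞) → [0,∞) increasing, convex, superlinear with L(0)=0, H its Legendre transform, and g : X → ℝ Lipschitz with Lipschitz constant lip(g). Then the map (x,t) ↦ Q_t g(x) is Lipschitz on X × (0,∞) with respect to the product metric d(x,ξ) + |t − s|, with Lipschitz constant at most max{lip(g), H(lip(g))}: for all x, ξ ∈ X and s, t > 0, |Q_t g(x) − Q_s g(ξ)| ≤ max{lip(g), H(lip(g))}·(d(x,ξ) + |t − s|). -/

import Mathlib

/-!
For a fixed time, compare a competitor `y` of `Q_t g(ξ)` with the point `x`: if `y` is at least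
as close to `x` as to `ξ`, monotonicity of `L` makes `y` a cheaper competitor for `x`; otherwise
the point `z` on a geodesic from `x` to `y` with `d(x, z) = d(ξ, y)` has the same transport cost
and `g z ≤ g y + lip(g) d(x, ξ)`. In time, `t ↦ t L(d/t)` is nonincreasing by convexity and
`L(0) = 0`, so `Q_t g ≤ Q_s g` for `s ≤ t`. Conversely the point `z` at fraction `s/t` of a
geodesic from `x` to `y` gives `Q_s g(x) ≤ s L(v) + g z` with `v = d(x, y)/t`, which exceeds
`t L(v) + g y` by at most `(t - s)(lip(g) v - L(v)) ≤ (t - s) H(lip g)` (Fenchel–Young).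
-/

open Metric Filter NNReal

/-- Hopf–Lax (infimum-convolution) semigroup, with `Q_0 g = g`. -/
noncomputable def hopfLaxQ {X : Type*} [MetricSpace X] (L : ℝ → ℝ) (g : X → ℝ)
    (t : ℝ) (x : X) : ℝ :=
  if t = 0 then g x else ⨅ y : X, (t * L (dist x y / t) + g y)

/-- The (one-dimensional) Legendre transform `H(w) = sup_{v ≥ 0} (w·v − L(v))`. -/
noncomputable def legendreH (L : ℝ → ℝ) (w : ℝ) : ℝ :=
  sSup ((fun v => w * v - L v) '' Set.Ici 0)

def IsGeodesicSpace (X : Type*) [MetricSpace X] : Prop :=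
  ∀ x y : X, ∀ τ : ℝ, 0 ≤ τ → τ ≤ 1 →
    ∃ z : X, dist x z = τ * dist x y ∧ dist z y = (1 - τ) * dist x y

theorem IsGeodesicSpace.exists_dist_eq {X : Type*} [MetricSpace X] (hX : IsGeodesicSpace X)
    (x y : X) {r : ℝ} (hr₀ : 0 ≤ r) (hr : r ≤ dist x y) :
    ∃ z, dist x z = r ∧ dist z y = dist x y - r := by
  rcases hr₀.eq_or_lt with rfl | hr_pos
  · exact ⟨x, dist_self x, by rw [sub_zero]⟩
  have hxy : dist x y ≠ 0 := (hr_pos.trans_le hr).ne'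
  obtain ⟨z, hxz, hzy⟩ :=
    hX x y (r / dist x y) (by positivity) (div_le_one_of_le₀ hr dist_nonneg)
  exact ⟨z, by rw [hxz, div_mul_cancel₀ r hxy],
    by rw [hzy, sub_mul, one_mul, div_mul_cancel₀ r hxy]⟩

section Legendre

variable {L : ℝ → ℝ}

theorem legendreH_bddAbove (hLnonneg : ∀ u, 0 ≤ u → 0 ≤ L u)
    (hLsuper : Tendsto (fun u => L u / u) atTop atTop) (w : ℝ) :
    BddAbove ((fun v => w * v - L v) '' Set.Ici 0) := by
  obtain ⟨M, hM⟩ := (hLsuper.eventually_ge_atTop w).exists_forall_of_atTop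
  refine ⟨|w| * max M 0, ?_⟩
  rintro _ ⟨v, hv : 0 ≤ v, rfl⟩
  rcases le_or_gt v (max M 0) with hvM | hMv
  · have : w * v ≤ |w| * max M 0 :=
      (le_abs_self w |> mul_le_mul_of_nonneg_right <| hv).trans (by gcongr)
    linarith [hLnonneg v hv]
  · have hv_pos : 0 < v := (le_max_right M 0).trans_lt hMv
    have : w * v ≤ L v := (le_div_iff₀ hv_pos).mp (hM v ((le_max_left M 0).trans hMv.le))
    have : 0 ≤ |w| * max M 0 := by positivity
    linarith

theorem mul_sub_le_legendreH (hLnonneg : ∀ u, 0 ≤ u → 0 ≤ L u)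
    (hLsuper : Tendsto (fun u => L u / u) atTop atTop) (w : ℝ) {v : ℝ} (hv : 0 ≤ v) :
    w * v - L v ≤ legendreH L w :=
  le_csSup (legendreH_bddAbove hLnonneg hLsuper w) ⟨v, hv, rfl⟩

theorem legendreH_nonneg (hL0 : L 0 = 0) (hLnonneg : ∀ u, 0 ≤ u → 0 ≤ L u)
    (hLsuper : Tendsto (fun u => L u / u) atTop atTop) (w : ℝ) : 0 ≤ legendreH L w := by
  simpa [hL0] using mul_sub_le_legendreH hLnonneg hLsuper w le_rfl

theorem mul_sub_mul_le_mul_legendreH (hLnonneg : ∀ u, 0 ≤ u → 0 ≤ L u)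
    (hLsuper : Tendsto (fun u => L u / u) atTop atTop) (w : ℝ) {d t : ℝ} (hd : 0 ≤ d)
    (ht : 0 < t) : w * d - t * L (d / t) ≤ t * legendreH L w := by
  have hscale : t * (w * (d / t)) = w * d := by field_simp
  linarith [mul_le_mul_of_nonneg_left
    (mul_sub_le_legendreH hLnonneg hLsuper w (div_nonneg hd ht.le)) ht.le]

end Legendre

theorem ConvexOn.mul_apply_div_le {L : ℝ → ℝ} (hL0 : L 0 = 0)
    (hLconv : ConvexOn ℝ (Set.Ici 0) L) {s t d : ℝ} (hs : 0 < s) (hst : s ≤ t) (hd : 0 ≤ d) :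
    t * L (d / t) ≤ s * L (d / s) := by
  have ht : 0 < t := hs.trans_le hst
  have hconv := hLconv.2 (Set.mem_Ici.mpr (div_nonneg hd hs.le)) (Set.mem_Ici.mpr le_rfl)
    (div_nonneg hs.le ht.le) (sub_nonneg.mpr ((div_le_one ht).mpr hst)) (add_sub_cancel _ _)
  have hds : s / t * (d / s) = d / t := by field_simp
  simp only [smul_eq_mul, mul_zero, add_zero, hL0, hds] at hconv
  calc t * L (d / t) ≤ t * (s / t * L (d / s)) := mul_le_mul_of_nonneg_left hconv ht.le
    _ = s * L (d / s) := by field_simp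

section HopfLax

variable {X : Type*} [MetricSpace X] {L : ℝ → ℝ} {g : X → ℝ} {K : ℝ≥0}

theorem hopfLaxQ_of_ne_zero (L : ℝ → ℝ) (g : X → ℝ) {t : ℝ} (ht : t ≠ 0) (x : X) :
    hopfLaxQ L g t x = ⨅ y, (t * L (dist x y / t) + g y) :=
  if_neg ht

theorem hopfLaxQ_le (hLnonneg : ∀ u, 0 ≤ u → 0 ≤ L u)
    (hLsuper : Tendsto (fun u => L u / u) atTop atTop) (hg : LipschitzWith K g) {t : ℝ}
    (ht : 0 < t) (x y : X) : hopfLaxQ L g t x ≤ t * L (dist x y / t) + g y := by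
  rw [hopfLaxQ_of_ne_zero L g ht.ne']
  -- the lower bound comes from `g y ≥ g x - K d(x, y)` and Fenchel–Young
  refine ciInf_le ⟨g x - t * legendreH L K, ?_⟩ y
  rintro _ ⟨y, rfl⟩
  linarith [hg.le_add_mul x y,
    mul_sub_mul_le_mul_legendreH hLnonneg hLsuper K (dist_nonneg (x := x) (y := y)) ht]

theorem le_hopfLaxQ [Nonempty X] {t c : ℝ} (ht : t ≠ 0) (x : X)
    (h : ∀ y, c ≤ t * L (dist x y / t) + g y) : c ≤ hopfLaxQ L g t x := by
  rw [hopfLaxQ_of_ne_zero L g ht]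
  exact le_ciInf h

theorem hopfLaxQ_le_add_dist [Nonempty X] (hX : IsGeodesicSpace X)
    (hLnonneg : ∀ u, 0 ≤ u → 0 ≤ L u) (hLmono : MonotoneOn L (Set.Ici 0))
    (hLsuper : Tendsto (fun u => L u / u) atTop atTop) (hg : LipschitzWith K g) {t : ℝ}
    (ht : 0 < t) (x ξ : X) : hopfLaxQ L g t x ≤ hopfLaxQ L g t ξ + K * dist x ξ := by
  rw [← sub_le_iff_le_add]
  refine le_hopfLaxQ ht.ne' ξ fun y => sub_le_iff_le_add.mpr ?_
  rcases le_or_gt (dist x y) (dist ξ y) with hxy | hξy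
  · have hL : L (dist x y / t) ≤ L (dist ξ y / t) :=
      hLmono (Set.mem_Ici.mpr (by positivity)) (Set.mem_Ici.mpr (by positivity)) (by gcongr)
    have : 0 ≤ (K : ℝ) * dist x ξ := by positivity
    linarith [hopfLaxQ_le hLnonneg hLsuper hg ht x y, mul_le_mul_of_nonneg_left hL ht.le]
  · obtain ⟨z, hxz, hzy⟩ := hX.exists_dist_eq x y dist_nonneg hξy.le
    have hzy_le : (K : ℝ) * dist z y ≤ K * dist x ξ := by
      gcongr
      linarith [dist_triangle x ξ y]
    have hcost := hopfLaxQ_le hLnonneg hLsuper hg ht x z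
    rw [hxz] at hcost
    linarith [hg.le_add_mul z y]

theorem hopfLaxQ_antitoneOn_time [Nonempty X] (hL0 : L 0 = 0)
    (hLnonneg : ∀ u, 0 ≤ u → 0 ≤ L u) (hLconv : ConvexOn ℝ (Set.Ici 0) L)
    (hLsuper : Tendsto (fun u => L u / u) atTop atTop) (hg : LipschitzWith K g) {s t : ℝ}
    (hs : 0 < s) (hst : s ≤ t) (x : X) : hopfLaxQ L g t x ≤ hopfLaxQ L g s x :=
  le_hopfLaxQ hs.ne' x fun y => by
    linarith [hopfLaxQ_le hLnonneg hLsuper hg (hs.trans_le hst) x y,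
      hLconv.mul_apply_div_le hL0 hs hst (dist_nonneg (x := x) (y := y))]

theorem hopfLaxQ_le_add_legendreH [Nonempty X] (hX : IsGeodesicSpace X)
    (hLnonneg : ∀ u, 0 ≤ u → 0 ≤ L u) (hLsuper : Tendsto (fun u => L u / u) atTop atTop)
    (hg : LipschitzWith K g) {s t : ℝ} (hs : 0 < s) (hst : s ≤ t) (x : X) :
    hopfLaxQ L g s x ≤ hopfLaxQ L g t x + legendreH L K * (t - s) := by
  have ht : 0 < t := hs.trans_le hst
  rw [← sub_le_iff_le_add]
  refine le_hopfLaxQ ht.ne' x fun y => sub_le_iff_le_add.mpr ?_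
  set v := dist x y / t
  have hv : 0 ≤ v := by positivity
  have hxy : dist x y = t * v := by simp only [v]; field_simp
  obtain ⟨z, hxz, hzy⟩ := hX.exists_dist_eq x y (r := s * v) (by positivity)
    (by rw [hxy]; gcongr)
  have hcost := hopfLaxQ_le hLnonneg hLsuper hg hs x z
  rw [hxz, mul_div_cancel_left₀ v hs.ne'] at hcost
  have hfenchel := mul_le_mul_of_nonneg_left (mul_sub_le_legendreH hLnonneg hLsuper K hv)
    (sub_nonneg.mpr hst)
  have hgz := hg.le_add_mul z y
  rw [hzy, hxy] at hgz
  linarith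

theorem abs_hopfLaxQ_sub_le_dist [Nonempty X] (hX : IsGeodesicSpace X)
    (hLnonneg : ∀ u, 0 ≤ u → 0 ≤ L u) (hLmono : MonotoneOn L (Set.Ici 0))
    (hLsuper : Tendsto (fun u => L u / u) atTop atTop) (hg : LipschitzWith K g) {t : ℝ}
    (ht : 0 < t) (x ξ : X) : |hopfLaxQ L g t x - hopfLaxQ L g t ξ| ≤ K * dist x ξ := by
  rw [abs_sub_le_iff]
  constructor
  · linarith [hopfLaxQ_le_add_dist hX hLnonneg hLmono hLsuper hg ht x ξ]
  · rw [dist_comm]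
    linarith [hopfLaxQ_le_add_dist hX hLnonneg hLmono hLsuper hg ht ξ x]

theorem abs_hopfLaxQ_sub_le_legendreH [Nonempty X] (hX : IsGeodesicSpace X) (hL0 : L 0 = 0)
    (hLnonneg : ∀ u, 0 ≤ u → 0 ≤ L u) (hLconv : ConvexOn ℝ (Set.Ici 0) L)
    (hLsuper : Tendsto (fun u => L u / u) atTop atTop) (hg : LipschitzWith K g) {s t : ℝ}
    (hs : 0 < s) (ht : 0 < t) (x : X) :
    |hopfLaxQ L g t x - hopfLaxQ L g s x| ≤ legendreH L K * |t - s| := by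
  wlog hst : s ≤ t generalizing s t
  · rw [abs_sub_comm, abs_sub_comm t]
    exact this ht hs (le_of_not_ge hst)
  rw [abs_of_nonneg (sub_nonneg.mpr hst), abs_sub_le_iff]
  constructor
  · linarith [hopfLaxQ_antitoneOn_time hL0 hLnonneg hLconv hLsuper hg hs hst x,
      mul_nonneg (legendreH_nonneg hL0 hLnonneg hLsuper K) (sub_nonneg.mpr hst)]
  · linarith [hopfLaxQ_le_add_legendreH hX hLnonneg hLsuper hg hs hst x]

end HopfLax

theorem hopfLax_lipschitz_spacetime_general
    {X : Type*} [MetricSpace X]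
    (hgeo : ∀ x y : X, ∀ τ : ℝ, 0 ≤ τ → τ ≤ 1 →
      ∃ z : X, dist x z = τ * dist x y ∧ dist z y = (1 - τ) * dist x y)
    (L : ℝ → ℝ) (hL0 : L 0 = 0)
    (hLnonneg : ∀ u, 0 ≤ u → 0 ≤ L u)
    (hLmono : MonotoneOn L (Set.Ici 0))
    (hLconv : ConvexOn ℝ (Set.Ici 0) L)
    (hLsuper : Tendsto (fun u => L u / u) atTop atTop)
    (g : X → ℝ) (Kg : ℝ≥0) (hg : LipschitzWith Kg g)
    (x ξ : X) (s t : ℝ) (hs : 0 < s) (ht : 0 < t) :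
    |hopfLaxQ L g t x - hopfLaxQ L g s ξ| ≤
      max (Kg : ℝ) (legendreH L (Kg : ℝ)) * (dist x ξ + |t - s|) := by
  have : Nonempty X := ⟨x⟩
  calc |hopfLaxQ L g t x - hopfLaxQ L g s ξ|
      ≤ |hopfLaxQ L g t x - hopfLaxQ L g t ξ| + |hopfLaxQ L g t ξ - hopfLaxQ L g s ξ| :=
        abs_sub_le _ _ _
    _ ≤ Kg * dist x ξ + legendreH L Kg * |t - s| :=
        add_le_add (abs_hopfLaxQ_sub_le_dist hgeo hLnonneg hLmono hLsuper hg ht x ξ)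
          (abs_hopfLaxQ_sub_le_legendreH hgeo hL0 hLnonneg hLconv hLsuper hg hs ht ξ)
    _ ≤ max (Kg : ℝ) (legendreH L Kg) * (dist x ξ + |t - s|) := by
        rw [mul_add]
        gcongr
        exacts [le_max_left _ _, le_max_right _ _]

/-- `(x,t) ↦ Q_t g(x)` is Lipschitz on `X × (0,∞)` with constant
`max (lip g) (H (lip g))` for the product metric `d(x,ξ) + |t − s|`. -/
theorem hopfLax_lipschitz_spacetime
    {X : Type*} [MetricSpace X] [ProperSpace X] [Nonempty X]
    (hgeo : ∀ x y : X, ∀ τ : ℝ, 0 ≤ τ → τ ≤ 1 →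
      ∃ z : X, dist x z = τ * dist x y ∧ dist z y = (1 - τ) * dist x y)
    (L : ℝ → ℝ) (hL0 : L 0 = 0)
    (hLnonneg : ∀ u, 0 ≤ u → 0 ≤ L u)
    (hLmono : MonotoneOn L (Set.Ici 0))
    (hLconv : ConvexOn ℝ (Set.Ici 0) L)
    (hLsuper : Tendsto (fun u => L u / u) atTop atTop)
    (g : X → ℝ) (Kg : ℝ≥0) (hg : LipschitzWith Kg g)
    (x ξ : X) (s t : ℝ) (hs : 0 < s) (ht : 0 < t) :
    |hopfLaxQ L g t x - hopfLaxQ L g s ξ| ≤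
      max (Kg : ℝ) (legendreH L (Kg : ℝ)) * (dist x ξ + |t - s|) :=
  hopfLax_lipschitz_spacetime_general hgeo L hL0 hLnonneg hLmono hLconv hLsuper g Kg hg x ξ s t hs
    ht
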